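/- Let d, T be positive integers, let L¹, …, L^N ∈ 𝕃, and let λ₁, …, λ_N > 0 with ∑_{i=1}^N λ_i = 1. Then the adapted Bures–Wasserstein barycenter functional G(L) = ∑_{i=1}^N λ_i d_ABW(L, L^i)² attains its minimum over 𝕃, i.e., there exists L̄ ∈ 𝕃 with G(L̄) ≤ G(L) for all L ∈ 𝕃. -/

import Mathlib

open Matrix

/-- Squared Frobenius norm of a real matrix: `‖A‖_F² = tr(Aᵀ A)`. -/
noncomputable def frobSq {m n : Type*} [Fintype m] [Fintype n] (A : Matrix m n ℝ) : ℝ :=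
  Matrix.trace (Aᵀ * A)

/-- `O ∈ O(d)`: a real orthogonal matrix. -/
def IsOrth {d : ℕ} (O : Matrix (Fin d) (Fin d) ℝ) : Prop :=
  O * Oᵀ = 1 ∧ Oᵀ * O = 1

/-- `L ∈ 𝕃`: block-lower triangular w.r.t. `T` blocks of size `d`
(indices are pairs `(i, t)` with `i : Fin d` the within-block index and `t : Fin T`
the block index); the block `L_{t,s}` vanishes for `t < s`. -/
def BlockLT {d T : ℕ} (L : Matrix (Fin d × Fin T) (Fin d × Fin T) ℝ) : Prop :=
  ∀ p q : Fin d × Fin T, p.2 < q.2 → L p q = 0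

/-- `O ∈ 𝕆`: block-diagonal with orthogonal `d × d` diagonal blocks. -/
def BlockOrth {d T : ℕ} (O : Matrix (Fin d × Fin T) (Fin d × Fin T) ℝ) : Prop :=
  ∃ f : Fin T → Matrix (Fin d) (Fin d) ℝ, (∀ t, IsOrth (f t)) ∧ O = Matrix.blockDiagonal f

/-- Truncated `t`-th column `L̃_t ∈ ℝ^{(T−t)d×d}` (0-based `t`): the rows of the `t`-th block
column of `L` from block row `t` on. -/
def truncCol {d T : ℕ} (L : Matrix (Fin d × Fin T) (Fin d × Fin T) ℝ) (t : Fin T) :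
    Matrix (Fin (T - t.val) × Fin d) (Fin d) ℝ :=
  fun p j => L (p.2, ⟨t.val + p.1.val, by have := p.1.isLt; omega⟩) (j, t)

/-- Column covariance `Σ̃_t^L = L̃_t L̃_tᵀ`. -/
noncomputable def colCov {d T : ℕ} (L : Matrix (Fin d × Fin T) (Fin d × Fin T) ℝ) (t : Fin T) :
    Matrix (Fin (T - t.val) × Fin d) (Fin (T - t.val) × Fin d) ℝ :=
  truncCol L t * (truncCol L t)ᵀ

/-- The positive semidefinite square root of a PSD matrix (junk value `0` otherwise). -/
noncomputable def sqrtPSD {n : Type*} [Fintype n] [DecidableEq n] (P : Matrix n n ℝ) :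
    Matrix n n ℝ :=
  by classical exact if h : P.PosSemidef then (h.1.eigenvectorUnitary.1 * Matrix.diagonal ((↑) ∘ Real.sqrt ∘ h.1.eigenvalues) *
      (star h.1.eigenvectorUnitary : Matrix n n ℝ)) else 0

/-- The Bures–Wasserstein distance between (PSD) matrices. -/
noncomputable def dBW {n : Type*} [Fintype n] [DecidableEq n] (S1 S2 : Matrix n n ℝ) : ℝ :=
  Real.sqrt (Matrix.trace S1 + Matrix.trace S2 -
    2 * Matrix.trace (sqrtPSD (sqrtPSD S2 * S1 * sqrtPSD S2)))

/-- The squared adapted Bures–Wasserstein distance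
`d_ABW(L,M)² = min_{O ∈ 𝕆} ‖L − MO‖_F²` (the minimum over the compact group `𝕆` is attained,
so it equals the infimum). -/
noncomputable def dABWsq {d T : ℕ} (L M : Matrix (Fin d × Fin T) (Fin d × Fin T) ℝ) : ℝ :=
  sInf {x : ℝ | ∃ O, BlockOrth O ∧ x = frobSq (L - M * O)}

set_option maxHeartbeats 1000000


lemma frobSq_eq_sum {m n : Type*} [Fintype m] [Fintype n] (A : Matrix m n ℝ) :
    frobSq A = ∑ j, ∑ i, (A i j)^2 := by
  simp [frobSq, Matrix.trace, Matrix.mul_apply, Matrix.diag, sq]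

lemma frobSq_nonneg {m n : Type*} [Fintype m] [Fintype n] (A : Matrix m n ℝ) :
    0 ≤ frobSq A := by
  rw [frobSq_eq_sum]; positivity

lemma continuous_frobSq {m n : Type*} [Fintype m] [Fintype n] :
    Continuous (frobSq : Matrix m n ℝ → ℝ) := by
  have h : (frobSq : Matrix m n ℝ → ℝ) = fun A => ∑ j, ∑ i, (A i j)^2 :=
    funext frobSq_eq_sum
  rw [h]
  refine continuous_finset_sum _ fun j _ => continuous_finset_sum _ fun i _ => ?_
  exact ((continuous_apply j).comp (continuous_apply i)).pow 2

noncomputable def toE {ι κ : Type*} [Fintype ι] [Fintype κ] (A : Matrix ι κ ℝ) :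
    EuclideanSpace ℝ (ι × κ) := (WithLp.equiv 2 _).symm fun p => A p.1 p.2

lemma toE_sub {ι κ : Type*} [Fintype ι] [Fintype κ] (A B : Matrix ι κ ℝ) :
    toE (A - B) = toE A - toE B := rfl

lemma norm_toE_sq {ι κ : Type*} [Fintype ι] [Fintype κ] (A : Matrix ι κ ℝ) :
    ‖toE A‖^2 = frobSq A := by
  rw [EuclideanSpace.norm_eq, Real.sq_sqrt (by positivity)]
  rw [frobSq_eq_sum, Finset.sum_comm]
  rw [show (∑ i : ι × κ, ‖toE A i‖ ^ 2) = ∑ i : ι × κ, (A i.1 i.2)^2 from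
    Finset.sum_congr rfl fun i _ => by simp [toE, Real.norm_eq_abs, sq_abs]]
  rw [Fintype.sum_prod_type]

lemma sqrt_frobSq_eq {ι κ : Type*} [Fintype ι] [Fintype κ] (A : Matrix ι κ ℝ) :
    Real.sqrt (frobSq A) = ‖toE A‖ := by
  rw [← norm_toE_sq, Real.sqrt_sq (norm_nonneg _)]

lemma frobSq_sub_ge {ι κ : Type*} [Fintype ι] [Fintype κ] (A B : Matrix ι κ ℝ) :
    (Real.sqrt (frobSq A) - Real.sqrt (frobSq B))^2 ≤ frobSq (A - B) := by
  rw [← norm_toE_sq (A - B), toE_sub, sqrt_frobSq_eq, sqrt_frobSq_eq]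
  calc (‖toE A‖ - ‖toE B‖)^2 = |‖toE A‖ - ‖toE B‖|^2 := (sq_abs _).symm
    _ ≤ ‖toE A - toE B‖^2 :=
      pow_le_pow_left₀ (abs_nonneg _) (abs_norm_sub_norm_le _ _) 2





section Blocks
variable {d T : ℕ}

lemma blockOrth_one : BlockOrth (1 : Matrix (Fin d × Fin T) (Fin d × Fin T) ℝ) :=
  ⟨fun _ => 1, fun _ => ⟨by simp, by simp⟩, Matrix.blockDiagonal_one.symm⟩

lemma BlockOrth.mul_transpose {O : Matrix (Fin d × Fin T) (Fin d × Fin T) ℝ}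
    (h : BlockOrth O) : O * Oᵀ = 1 := by
  obtain ⟨f, hf, rfl⟩ := h
  rw [Matrix.blockDiagonal_transpose, ← Matrix.blockDiagonal_mul]
  have h : (fun k => f k * (f k)ᵀ) = fun _ => (1 : Matrix (Fin d) (Fin d) ℝ) :=
    funext fun t => (hf t).1
  rw [h]
  exact Matrix.blockDiagonal_one

lemma frobSq_mul_blockOrth (M O : Matrix (Fin d × Fin T) (Fin d × Fin T) ℝ)
    (h : BlockOrth O) : frobSq (M * O) = frobSq M := by
  have h1 := h.mul_transpose
  unfold frobSq
  rw [Matrix.transpose_mul, Matrix.mul_assoc]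
  rw [Matrix.trace_mul_comm]
  rw [Matrix.mul_assoc, Matrix.mul_assoc, h1, Matrix.mul_one]

-- compactness of the orthogonal group in dimension n
lemma isCompact_isOrth {n : ℕ} : IsCompact {g : Matrix (Fin n) (Fin n) ℝ | IsOrth g} := by
  have hbox : IsCompact (Set.univ.pi fun _ : Fin n =>
      (Set.univ.pi fun _ : Fin n => Set.Icc (-1 : ℝ) 1 : Set (Fin n → ℝ))) :=
    isCompact_univ_pi (fun _ : Fin n =>
      isCompact_univ_pi (fun _ : Fin n => isCompact_Icc (a := (-1:ℝ)) (b := 1)))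
  refine hbox.of_isClosed_subset ?_ ?_
  · have : {g : Matrix (Fin n) (Fin n) ℝ | IsOrth g} =
        (fun g : Matrix (Fin n) (Fin n) ℝ => g * gᵀ) ⁻¹' {1} ∩
        (fun g : Matrix (Fin n) (Fin n) ℝ => gᵀ * g) ⁻¹' {1} := by
      ext g; simp [IsOrth]
    rw [this]
    exact ((isClosed_singleton.preimage (continuous_id.matrix_mul
        continuous_id.matrix_transpose)).inter
      (isClosed_singleton.preimage (continuous_id.matrix_transpose.matrix_mul
        continuous_id)))
  · rintro g ⟨hg, -⟩
    have key : ∀ i j, -1 ≤ g i j ∧ g i j ≤ 1 := by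
      intro i j
      have hsum : ∑ k, (g i k)^2 = 1 := by
        have : ∑ k, g i k * g i k = (1 : Matrix (Fin n) (Fin n) ℝ) i i :=
          congrFun (congrFun hg i) i
        simpa [Matrix.transpose_apply, sq] using this
      have hle : (g i j)^2 ≤ 1 := by
        rw [← hsum]
        exact Finset.single_le_sum (f := fun k => (g i k)^2)
          (fun k _ => sq_nonneg _) (Finset.mem_univ j)
      constructor <;> nlinarith [sq_nonneg (g i j + 1), sq_nonneg (g i j - 1)]
    exact Set.mem_univ_pi.mpr fun i => Set.mem_univ_pi.mpr fun j =>
      Set.mem_Icc.mpr (key i j)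

end Blocks

section Blocks2
variable {d T : ℕ}

lemma isCompact_blockOrth :
    IsCompact {O : Matrix (Fin d × Fin T) (Fin d × Fin T) ℝ | BlockOrth O} := by
  have himg : {O : Matrix (Fin d × Fin T) (Fin d × Fin T) ℝ | BlockOrth O} =
      Matrix.blockDiagonal '' (Set.univ.pi fun _ : Fin T =>
        {g : Matrix (Fin d) (Fin d) ℝ | IsOrth g}) := by
    ext O
    constructor
    · rintro ⟨f, hf, rfl⟩
      exact ⟨f, fun t _ => hf t, rfl⟩
    · rintro ⟨f, hf, rfl⟩
      exact ⟨f, fun t => hf t (Set.mem_univ t), rfl⟩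
  rw [himg]
  exact ((isCompact_univ_pi fun _ => isCompact_isOrth).image
    continuous_id.matrix_blockDiagonal)

lemma dABWsq_bddBelow (K M : Matrix (Fin d × Fin T) (Fin d × Fin T) ℝ) :
    BddBelow {x : ℝ | ∃ O, BlockOrth O ∧ x = frobSq (K - M * O)} := by
  refine ⟨0, ?_⟩
  rintro x ⟨O, hO, rfl⟩
  exact frobSq_nonneg _

lemma dABWsq_le (K M O : Matrix (Fin d × Fin T) (Fin d × Fin T) ℝ) (hO : BlockOrth O) :
    dABWsq K M ≤ frobSq (K - M * O) :=
  csInf_le (dABWsq_bddBelow K M) ⟨O, hO, rfl⟩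

lemma le_dABWsq {K M : Matrix (Fin d × Fin T) (Fin d × Fin T) ℝ} {b : ℝ}
    (hb : ∀ O, BlockOrth O → b ≤ frobSq (K - M * O)) : b ≤ dABWsq K M :=
  le_csInf ⟨_, 1, blockOrth_one, rfl⟩ (by rintro x ⟨O, hO, rfl⟩; exact hb O hO)

lemma dABWsq_nonneg (K M : Matrix (Fin d × Fin T) (Fin d × Fin T) ℝ) :
    0 ≤ dABWsq K M :=
  le_dABWsq fun O _ => frobSq_nonneg _

lemma dABWsq_exists (K M : Matrix (Fin d × Fin T) (Fin d × Fin T) ℝ) :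
    ∃ O, BlockOrth O ∧ dABWsq K M = frobSq (K - M * O) := by
  have hc : Continuous fun O : Matrix (Fin d × Fin T) (Fin d × Fin T) ℝ =>
      frobSq (K - M * O) :=
    continuous_frobSq.comp (continuous_const.sub
      (Continuous.matrix_mul (continuous_const : Continuous fun _ :
        Matrix (Fin d × Fin T) (Fin d × Fin T) ℝ => M) continuous_id))
  obtain ⟨O₀, hO₀, hmin⟩ := isCompact_blockOrth.exists_isMinOn
    ⟨1, blockOrth_one⟩ hc.continuousOn
  refine ⟨O₀, hO₀, le_antisymm (dABWsq_le K M O₀ hO₀) ?_⟩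
  exact le_dABWsq fun O hO => isMinOn_iff.mp hmin O hO

end Blocks2

lemma entry_sq_le_frobSq {m n : Type*} [Fintype m] [Fintype n] (A : Matrix m n ℝ)
    (p : m) (q : n) : (A p q)^2 ≤ frobSq A := by
  rw [frobSq_eq_sum]
  calc (A p q)^2 ≤ ∑ i, (A i q)^2 :=
        Finset.single_le_sum (f := fun i => (A i q)^2) (fun i _ => sq_nonneg _)
          (Finset.mem_univ p)
    _ ≤ ∑ j, ∑ i, (A i j)^2 :=
        Finset.single_le_sum (f := fun j => ∑ i, (A i j)^2)
          (fun j _ => Finset.sum_nonneg fun i _ => sq_nonneg _) (Finset.mem_univ q)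


/-- The adapted Bures–Wasserstein barycenter functional
`G(L) = ∑ᵢ λᵢ d_ABW(L, Lⁱ)²` attains its minimum over `𝕃`. -/
theorem stmt7 (d T N : ℕ) (hd : 0 < d) (hT : 0 < T)
    (L : Fin N → Matrix (Fin d × Fin T) (Fin d × Fin T) ℝ) (hL : ∀ i, BlockLT (L i))
    (lam : Fin N → ℝ) (hlam : ∀ i, 0 < lam i) (hsum : ∑ i, lam i = 1) :
    ∃ Lbar : Matrix (Fin d × Fin T) (Fin d × Fin T) ℝ, BlockLT Lbar ∧
      ∀ K : Matrix (Fin d × Fin T) (Fin d × Fin T) ℝ, BlockLT K →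
        (∑ i, lam i * dABWsq Lbar (L i)) ≤ ∑ i, lam i * dABWsq K (L i) := by
  classical
  set c : ℝ := ∑ i, Real.sqrt (frobSq (L i)) with hcdef
  have hc0 : 0 ≤ c := Finset.sum_nonneg fun i _ => Real.sqrt_nonneg _
  have hci : ∀ i, Real.sqrt (frobSq (L i)) ≤ c := fun i =>
    Finset.single_le_sum (f := fun j => Real.sqrt (frobSq (L j)))
      (fun j _ => Real.sqrt_nonneg _) (Finset.mem_univ i)
  set R : ℝ := 2 * c + 1 with hRdef
  have hR0 : 0 ≤ R := by rw [hRdef]; linarith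
  -- compactness of the constrained set
  have hbox : IsCompact (Set.univ.pi fun _ : Fin d × Fin T =>
      (Set.univ.pi fun _ : Fin d × Fin T => Set.Icc (-R) R : Set (Fin d × Fin T → ℝ))) :=
    isCompact_univ_pi fun _ => isCompact_univ_pi fun _ => isCompact_Icc
  have hSc : IsCompact {K : Matrix (Fin d × Fin T) (Fin d × Fin T) ℝ |
      BlockLT K ∧ frobSq K ≤ R^2} := by
    refine hbox.of_isClosed_subset ?_ ?_
    · have e2 : {K : Matrix (Fin d × Fin T) (Fin d × Fin T) ℝ | BlockLT K} =
          ⋂ p : Fin d × Fin T, ⋂ q : Fin d × Fin T,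
            {K : Matrix (Fin d × Fin T) (Fin d × Fin T) ℝ | p.2 < q.2 → K p q = 0} := by
        ext K
        simp only [Set.mem_iInter, Set.mem_setOf_eq]
        exact Iff.rfl
      have hclosedLT : IsClosed {K : Matrix (Fin d × Fin T) (Fin d × Fin T) ℝ |
          BlockLT K} := by
        rw [e2]
        refine isClosed_iInter fun p => isClosed_iInter fun q => ?_
        by_cases h : p.2 < q.2
        · simp only [h, true_implies]
          exact isClosed_eq ((continuous_apply q).comp (continuous_apply p)) continuous_const
        · have : {K : Matrix (Fin d × Fin T) (Fin d × Fin T) ℝ | p.2 < q.2 → K p q = 0} =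
              Set.univ := by ext K; simp [h]
          rw [this]; exact isClosed_univ
      rw [Set.setOf_and]
      exact hclosedLT.inter (isClosed_le continuous_frobSq continuous_const)
    · rintro K ⟨-, hKR⟩
      refine Set.mem_univ_pi.mpr fun p => Set.mem_univ_pi.mpr fun q => Set.mem_Icc.mpr ?_
      have h1 : (K p q)^2 ≤ R^2 := le_trans (entry_sq_le_frobSq K p q) hKR
      constructor <;> nlinarith [sq_nonneg (K p q + R), sq_nonneg (K p q - R)]
  -- compact product domain
  have hD : IsCompact ({K : Matrix (Fin d × Fin T) (Fin d × Fin T) ℝ |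
        BlockLT K ∧ frobSq K ≤ R^2} ×ˢ
      Set.univ.pi fun _ : Fin N =>
        {O : Matrix (Fin d × Fin T) (Fin d × Fin T) ℝ | BlockOrth O}) :=
    hSc.prod (isCompact_univ_pi fun _ => isCompact_blockOrth)
  have hfrob0 : frobSq (0 : Matrix (Fin d × Fin T) (Fin d × Fin T) ℝ) = 0 := by
    simp [frobSq]
  have hmem0 : ((0 : Matrix (Fin d × Fin T) (Fin d × Fin T) ℝ),
      fun _ : Fin N => (1 : Matrix (Fin d × Fin T) (Fin d × Fin T) ℝ)) ∈
      ({K : Matrix (Fin d × Fin T) (Fin d × Fin T) ℝ | BlockLT K ∧ frobSq K ≤ R^2} ×ˢ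
        Set.univ.pi fun _ : Fin N =>
          {O : Matrix (Fin d × Fin T) (Fin d × Fin T) ℝ | BlockOrth O}) := by
    refine ⟨⟨fun p q _ => rfl, ?_⟩, fun i _ => blockOrth_one⟩
    rw [hfrob0]; positivity
  have hHc : Continuous fun x : Matrix (Fin d × Fin T) (Fin d × Fin T) ℝ ×
      (Fin N → Matrix (Fin d × Fin T) (Fin d × Fin T) ℝ) =>
      ∑ i, lam i * frobSq (x.1 - L i * x.2 i) := by
    refine continuous_finset_sum _ fun i _ => Continuous.mul continuous_const ?_
    refine continuous_frobSq.comp (Continuous.sub continuous_fst ?_)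
    exact Continuous.matrix_mul continuous_const ((continuous_apply i).comp continuous_snd)
  obtain ⟨P, hPmem, hPmin⟩ := hD.exists_isMinOn ⟨_, hmem0⟩ hHc.continuousOn
  refine ⟨P.1, hPmem.1.1, ?_⟩
  intro K hK
  have step1 : ∑ i, lam i * dABWsq P.1 (L i) ≤
      ∑ i, lam i * frobSq (P.1 - L i * P.2 i) :=
    Finset.sum_le_sum fun i _ => mul_le_mul_of_nonneg_left
      (dABWsq_le P.1 (L i) (P.2 i) (hPmem.2 i (Set.mem_univ i))) (hlam i).le
  by_cases hKR : frobSq K ≤ R^2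
  · choose O hO hEq using fun i => dABWsq_exists K (L i)
    have hmemK : (K, O) ∈ ({K : Matrix (Fin d × Fin T) (Fin d × Fin T) ℝ |
          BlockLT K ∧ frobSq K ≤ R^2} ×ˢ
        Set.univ.pi fun _ : Fin N =>
          {O : Matrix (Fin d × Fin T) (Fin d × Fin T) ℝ | BlockOrth O}) :=
      ⟨⟨hK, hKR⟩, fun i _ => hO i⟩
    calc ∑ i, lam i * dABWsq P.1 (L i)
        ≤ ∑ i, lam i * frobSq (P.1 - L i * P.2 i) := step1
      _ ≤ ∑ i, lam i * frobSq (K - L i * O i) := isMinOn_iff.mp hPmin (K, O) hmemK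
      _ = ∑ i, lam i * dABWsq K (L i) :=
          Finset.sum_congr rfl fun i _ => by rw [hEq i]
  · have hKbig : R ≤ Real.sqrt (frobSq K) := by
      have h2 : R^2 ≤ frobSq K := (not_le.mp hKR).le
      calc R = Real.sqrt (R^2) := (Real.sqrt_sq hR0).symm
        _ ≤ Real.sqrt (frobSq K) := Real.sqrt_le_sqrt h2
    have hlow : ∀ i, (c+1)^2 ≤ dABWsq K (L i) := by
      intro i
      refine le_dABWsq fun O hO => ?_
      have h1 : Real.sqrt (frobSq (L i * O)) ≤ c := by
        rw [frobSq_mul_blockOrth _ _ hO]; exact hci i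
      have h3 : c + 1 ≤ Real.sqrt (frobSq K) - Real.sqrt (frobSq (L i * O)) := by
        rw [hRdef] at hKbig; linarith
      calc (c+1)^2 ≤ (Real.sqrt (frobSq K) - Real.sqrt (frobSq (L i * O)))^2 :=
            pow_le_pow_left₀ (by linarith) h3 2
        _ ≤ frobSq (K - L i * O) := frobSq_sub_ge K (L i * O)
    have hupp : ∑ i, lam i * frobSq (P.1 - L i * P.2 i) ≤ (c+1)^2 := by
      have h0 := isMinOn_iff.mp hPmin _ hmem0
      have heach : ∀ i, frobSq ((0 : Matrix (Fin d × Fin T) (Fin d × Fin T) ℝ) -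
          L i * 1) ≤ (c+1)^2 := by
        intro i
        have e : frobSq ((0 : Matrix (Fin d × Fin T) (Fin d × Fin T) ℝ) - L i * 1) =
            frobSq (L i) := by
          rw [Matrix.mul_one, zero_sub]
          simp [frobSq_eq_sum, Matrix.neg_apply, neg_sq]
        rw [e]
        have h4 : frobSq (L i) = (Real.sqrt (frobSq (L i)))^2 :=
          (Real.sq_sqrt (frobSq_nonneg _)).symm
        rw [h4]
        exact pow_le_pow_left₀ (Real.sqrt_nonneg _) (le_trans (hci i) (by linarith)) 2
      calc ∑ i, lam i * frobSq (P.1 - L i * P.2 i)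
          ≤ ∑ i, lam i * frobSq ((0 : Matrix (Fin d × Fin T) (Fin d × Fin T) ℝ) -
              L i * 1) := h0
        _ ≤ ∑ i, lam i * (c+1)^2 := Finset.sum_le_sum fun i _ =>
            mul_le_mul_of_nonneg_left (heach i) (hlam i).le
        _ = (c+1)^2 := by rw [← Finset.sum_mul, hsum, one_mul]
    have hfin : (c+1)^2 ≤ ∑ i, lam i * dABWsq K (L i) := by
      calc (c+1)^2 = ∑ i, lam i * (c+1)^2 := by rw [← Finset.sum_mul, hsum, one_mul]
        _ ≤ ∑ i, lam i * dABWsq K (L i) := Finset.sum_le_sum fun i _ =>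
            mul_le_mul_of_nonneg_left (hlow i) (hlam i).le
    linarith
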